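/- arXiv:2109.02500 — 2 statements merged into one kernel-verified Lean document; each statement's English description precedes it below -/
import Mathlib

section
/- Let 0<q<1. For every n≥0 and every x∈ℂ: 𝓑_n(−x;q) = (−1)^n·𝓑_n(x;q), and β_n(−x;q) = (−1)^n·Σ_{k=0}^{n} [(−1;q^{1/2})_k/(q^{1/2};q^{1/2})_k]·β_{n−k}(x;q). -/
open Complex Filter

noncomputable section

/-- finite q-Pochhammer `(a;q)_n` -/
def qp (q a : ℂ) (n : ℕ) : ℂ := ∏ j ∈ Finset.range n, (1 - a * q ^ j)

/-- infinite q-Pochhammer `(a;q)_∞` -/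
def qpInf (q a : ℂ) : ℂ := ∏' j : ℕ, (1 - a * q ^ j)

/-- the real power `q ^ t` viewed as a complex number -/
def qpow (q t : ℝ) : ℂ := ((q ^ t : ℝ) : ℂ)

/-- `ρ` is the family of polynomials `ρ_n` -/
def IsRho (q : ℝ) (ρ : ℕ → ℂ → ℂ) : Prop :=
  (∀ x : ℂ, ρ 0 x = 1) ∧
  ∀ n : ℕ, 1 ≤ n →
    (∃ P : Polynomial ℂ, P.natDegree = n ∧ ∀ x : ℂ, ρ n x = P.eval x) ∧
    ∀ z : ℂ, z ≠ 0 →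
      ρ n ((z + z⁻¹) / 2) =
        (1 + z ^ 2) * qp ((q : ℂ) ^ 2) (-((q : ℂ) ^ ((2 : ℤ) - (n : ℤ)) * z ^ 2)) (n - 1) *
          z ^ (-(n : ℤ))

/-- the q-exponential function `𝓔_q(x;w)` -/
def Eqf (q : ℝ) (ρ : ℕ → ℂ → ℂ) (x w : ℂ) : ℂ :=
  ∑' n : ℕ, (qpow q ((n : ℝ) ^ 2 / 4) / qp (q : ℂ) (q : ℂ) n) * ρ n x * w ^ n

/-- Suslov's q-Bernoulli polynomials `𝓑_n(x;q)` -/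
def IsBigB (q : ℝ) (ρ : ℕ → ℂ → ℂ) (B : ℕ → ℂ → ℂ) : Prop :=
  (∀ n : ℕ, ∃ P : Polynomial ℂ, P.natDegree = n ∧ ∀ x : ℂ, B n x = P.eval x) ∧
  ∀ x : ℂ, ∃ r : ℝ, 0 < r ∧ r ≤ 1 ∧ ∀ w : ℂ, ‖w‖ < r → ∃ S : ℂ,
    HasSum (fun n : ℕ => B n x * w ^ n) S ∧
    S * (qpInf (qpow q (1/2)) (-w) - qpInf (qpow q (1/2)) w) =
      w * qpInf ((q : ℂ) ^ 2) ((q : ℂ) * w ^ 2) * Eqf q ρ x w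

/-- the q-Bernoulli polynomials `β_n(x;q)` -/
def IsSmallB (q : ℝ) (ρ : ℕ → ℂ → ℂ) (B : ℕ → ℂ → ℂ) : Prop :=
  (∀ n : ℕ, ∃ P : Polynomial ℂ, P.natDegree = n ∧ ∀ x : ℂ, B n x = P.eval x) ∧
  ∀ x : ℂ, ∃ r : ℝ, 0 < r ∧ r ≤ 1 ∧ ∀ w : ℂ, ‖w‖ < r → ∃ S : ℂ,
    HasSum (fun n : ℕ => B n x * w ^ n) S ∧
    S * (qpInf (qpow q (1/2)) (-w) - qpInf (qpow q (1/2)) w) =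
      w * qpInf (qpow q (1/2)) w * Eqf q ρ x w

/-- the q-Euler polynomials `𝓔_n(x;q)` -/
def IsBigE (q : ℝ) (ρ : ℕ → ℂ → ℂ) (E : ℕ → ℂ → ℂ) : Prop :=
  (∀ n : ℕ, ∃ P : Polynomial ℂ, P.natDegree = n ∧ ∀ x : ℂ, E n x = P.eval x) ∧
  ∀ x : ℂ, ∃ r : ℝ, 0 < r ∧ r ≤ 1 ∧ ∀ w : ℂ, ‖w‖ < r → ∃ S : ℂ,
    HasSum (fun n : ℕ => E n x * w ^ n) S ∧
    S * (qpInf (qpow q (1/2)) (-w) + qpInf (qpow q (1/2)) w) =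
      qpInf ((q : ℂ) ^ 2) ((q : ℂ) * w ^ 2) * Eqf q ρ x w

/-- the q-Euler polynomials `Ẽ_n(x;q)` -/
def IsTildeE (q : ℝ) (ρ : ℕ → ℂ → ℂ) (E : ℕ → ℂ → ℂ) : Prop :=
  (∀ n : ℕ, ∃ P : Polynomial ℂ, P.natDegree = n ∧ ∀ x : ℂ, E n x = P.eval x) ∧
  ∀ x : ℂ, ∃ r : ℝ, 0 < r ∧ r ≤ 1 ∧ ∀ w : ℂ, ‖w‖ < r → ∃ S : ℂ,
    HasSum (fun n : ℕ => E n x * w ^ n) S ∧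
    S * (qpInf (qpow q (1/2)) (-w) + qpInf (qpow q (1/2)) w) =
      2 * qpInf (qpow q (1/2)) w * Eqf q ρ x w

/-- `g` is the Askey–Wilson derivative `𝓓_q f` -/
def AWEq (q : ℝ) (f g : ℂ → ℂ) : Prop :=
  ∀ z : ℂ, z ≠ 0 →
    g ((z + z⁻¹) / 2) =
      (f ((qpow q (1/2) * z + qpow q (-(1/2)) * z⁻¹) / 2) -
          f ((qpow q (-(1/2)) * z + qpow q (1/2) * z⁻¹) / 2)) /
        (((qpow q (1/2) - qpow q (-(1/2))) / 2) * (z - z⁻¹))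

/-- `Df` is the sequence of iterated Askey–Wilson derivatives of `f`, all entire -/
def IsAWIter (q : ℝ) (f : ℂ → ℂ) (Df : ℕ → ℂ → ℂ) : Prop :=
  Df 0 = f ∧ (∀ k : ℕ, Differentiable ℂ (Df k)) ∧ ∀ k : ℕ, AWEq q (Df k) (Df (k + 1))

/-- growth hypothesis: q-exponential growth of order less than `2 ln(1/q)`, or of
order `2 ln(1/q)` and type less than `2 ln 2 / ln(1/q)` -/
def Growth (q : ℝ) (f : ℂ → ℂ) : Prop :=
  (∃ K : ℝ, 0 < K ∧ ∃ α c : ℝ, 0 < c ∧ c < 1 ∧ ∀ x : ℂ, 1 ≤ ‖x‖ →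
      ‖f x‖ ≤ K * ‖x‖ ^ α * Real.exp (c * (Real.log ‖x‖) ^ 2 / Real.log (1 / q))) ∨
  (∃ K : ℝ, 0 < K ∧ ∃ α : ℝ, α < 2 * Real.log 2 / Real.log (1 / q) ∧ ∀ x : ℂ, 1 ≤ ‖x‖ →
      ‖f x‖ ≤ K * ‖x‖ ^ α * Real.exp ((Real.log ‖x‖) ^ 2 / Real.log (1 / q)))

/-- the basic sine at `η`: `S_q(η;w)` -/
def Seta (q : ℝ) (w : ℂ) : ℂ :=
  (qpInf (qpow q (1/2)) (-(I * w)) - qpInf (qpow q (1/2)) (I * w)) /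
    (2 * I * qpInf ((q : ℂ) ^ 2) (-((q : ℂ) * w ^ 2)))

/-- the basic cosine at `η`: `C_q(η;w)` -/
def Ceta (q : ℝ) (w : ℂ) : ℂ :=
  (qpInf (qpow q (1/2)) (-(I * w)) + qpInf (qpow q (1/2)) (I * w)) /
    (2 * qpInf ((q : ℂ) ^ 2) (-((q : ℂ) * w ^ 2)))

/-- `η = (q^{1/4} + q^{-1/4})/2` as a complex number -/
def etaC (q : ℝ) : ℂ := (qpow q (1/4) + qpow q (-(1/4))) / 2

/-! Since `ρ_n(-x) = (-1)^n ρ_n(x)`, replacing `x` by `-x` in a generating function amounts to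
replacing `w` by `-w`. The common denominator `(-w; q^{1/2})_∞ - (w; q^{1/2})_∞` is odd in `w`, so
the generating function of `𝓑` is unchanged, while for `β` the two numerators differ by the factor
`(w; q^{1/2})_∞ / (-w; q^{1/2})_∞ = Σ_k (-1; q^{1/2})_k / (q^{1/2}; q^{1/2})_k (-w)^k`
(q-binomial theorem). Coefficients are compared by the identity theorem for power series, so the
denominator only has to be nonzero for small real `w > 0`, where one product exceeds `1` and the
other is below `1`. -/

open Finset FormalMultilinearSeries
open scoped Topology

section PowerSeries

variable {a b : ℕ → ℂ} {r : ℝ}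

theorem ofReal_le_radius_ofScalars (h : ∀ w : ℂ, ‖w‖ < r → Summable fun n => a n * w ^ n) :
    ENNReal.ofReal r ≤ (ofScalars ℂ a).radius := by
  refine ENNReal.le_of_forall_nnreal_lt fun s hs => (ofScalars ℂ a).le_radius_of_tendsto (l := 0) ?_
  rw [← ENNReal.ofReal_coe_nnreal, ENNReal.ofReal_lt_ofReal_iff'] at hs
  simpa [ofScalars_norm] using (h s (by simpa using hs.1)).tendsto_atTop_zero.norm

theorem summable_norm_mul_pow_of_forall_summable
    (h : ∀ w : ℂ, ‖w‖ < r → Summable fun n => a n * w ^ n) {w : ℂ} (hw : ‖w‖ < r) :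
    Summable fun n => ‖a n * w ^ n‖ := by
  have hw' : w ∈ Metric.eball (0 : ℂ) (ofScalars ℂ a).radius := by
    refine Metric.mem_eball.2 (lt_of_lt_of_le ?_ (ofReal_le_radius_ofScalars h))
    simpa [edist_zero_right] using (ENNReal.ofReal_lt_ofReal_iff_of_nonneg (norm_nonneg w)).2 hw
  simpa [ofScalars_apply_eq, mul_comm] using (ofScalars ℂ a).summable_norm_apply hw'

theorem hasFPowerSeriesAt_tsum_ofScalars (hr : 0 < r)
    (h : ∀ w : ℂ, ‖w‖ < r → Summable fun n => a n * w ^ n) :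
    HasFPowerSeriesAt (fun w => ∑' n, a n * w ^ n) (ofScalars ℂ a) 0 := by
  have hpos : 0 < (ofScalars ℂ a).radius :=
    (ENNReal.ofReal_pos.2 hr).trans_le (ofReal_le_radius_ofScalars h)
  convert ((ofScalars ℂ a).hasFPowerSeriesOnBall hpos).hasFPowerSeriesAt using 1
  ext w
  simp [FormalMultilinearSeries.sum, mul_comm]

theorem eq_of_tsum_ofReal_eventuallyEq (hr : 0 < r)
    (ha : ∀ w : ℂ, ‖w‖ < r → Summable fun n => a n * w ^ n)
    (hb : ∀ w : ℂ, ‖w‖ < r → Summable fun n => b n * w ^ n)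
    (h : ∀ᶠ t : ℝ in 𝓝[>] 0, ∑' n, a n * (t : ℂ) ^ n = ∑' n, b n * (t : ℂ) ^ n) : a = b := by
  have hpa := hasFPowerSeriesAt_tsum_ofScalars hr ha
  have hpb := hasFPowerSeriesAt_tsum_ofScalars hr hb
  have hmap : Tendsto (fun t : ℝ => (t : ℂ)) (𝓝[>] 0) (𝓝[≠] 0) :=
    Complex.continuous_ofReal.continuousWithinAt.tendsto_nhdsWithin fun t ht => by
      simpa using ht.ne'
  have hev : (fun w => ∑' n, a n * w ^ n) =ᶠ[𝓝 0] fun w => ∑' n, b n * w ^ n :=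
    (hpa.analyticAt.frequently_eq_iff_eventually_eq hpb.analyticAt).1 (hmap.frequently h.frequently)
  exact ofScalars_series_injective ℂ ℂ (hpa.eq_formalMultilinearSeries (hpb.congr hev.symm))

end PowerSeries

theorem hasSum_sum_range_mul_mul_pow {c b : ℕ → ℂ} {w : ℂ}
    (hc : Summable fun k => ‖c k * w ^ k‖) (hb : Summable fun n => ‖b n * w ^ n‖) :
    HasSum (fun n => (∑ k ∈ range (n + 1), c k * b (n - k)) * w ^ n)
      ((∑' k, c k * w ^ k) * ∑' n, b n * w ^ n) := by
  refine (hasSum_sum_range_mul_of_summable_norm hc hb).congr_fun fun n => ?_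
  rw [sum_mul]
  refine sum_congr rfl fun k hk => ?_
  rw [← Nat.add_sub_cancel' (mem_range_succ_iff.1 hk), pow_add, Nat.add_sub_cancel_left]
  ring

section QPochhammer

variable {p : ℂ}

theorem qp_succ (p a : ℂ) (n : ℕ) : qp p a (n + 1) = qp p a n * (1 - a * p ^ n) :=
  prod_range_succ _ _

theorem one_sub_pow_succ_ne_zero (hp : ‖p‖ < 1) (n : ℕ) : 1 - p ^ (n + 1) ≠ 0 := by
  intro h
  have : ‖p ^ (n + 1)‖ < 1 := by
    rw [norm_pow]; exact pow_lt_one₀ (norm_nonneg p) hp n.succ_ne_zero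
  rw [← sub_eq_zero.1 h, norm_one] at this
  exact lt_irrefl _ this

theorem qp_self_ne_zero (hp : ‖p‖ < 1) (n : ℕ) : qp p p n ≠ 0 :=
  prod_ne_zero_iff.2 fun j _ => by rw [← pow_succ']; exact one_sub_pow_succ_ne_zero hp j

theorem multipliable_one_sub_mul_pow (hp : ‖p‖ < 1) (a : ℂ) :
    Multipliable fun j => 1 - a * p ^ j := by
  simpa [sub_eq_add_neg] using multipliable_one_add_of_summable (f := fun j => -(a * p ^ j))
    (by simpa [norm_mul] using (summable_geometric_of_lt_one (norm_nonneg p) hp).mul_left ‖a‖)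

theorem tendsto_qp_qpInf (hp : ‖p‖ < 1) (a : ℂ) :
    Tendsto (qp p a) atTop (𝓝 (qpInf p a)) :=
  (multipliable_one_sub_mul_pow hp a).tendsto_prod_tprod_nat

end QPochhammer

section QBinomial

def qBinomialSeries (p a z : ℂ) : ℂ := ∑' k, qp p a k / qp p p k * z ^ k

variable {p : ℂ} (a : ℂ)

theorem qBinomial_coeff_succ (k : ℕ) :
    qp p a (k + 1) / qp p p (k + 1) =
      qp p a k / qp p p k * ((1 - a * p ^ k) / (1 - p ^ (k + 1))) := by
  rw [qp_succ, qp_succ, ← pow_succ', mul_div_mul_comm]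

theorem summable_norm_qBinomial (hp : ‖p‖ < 1) {z : ℂ} (hz : ‖z‖ < 1) :
    Summable fun k => ‖qp p a k / qp p p k * z ^ k‖ := by
  have hpow := tendsto_pow_atTop_nhds_zero_of_norm_lt_one hp
  have hratio : Tendsto (fun k => ‖(1 - a * p ^ k) / (1 - p ^ (k + 1)) * z‖) atTop (𝓝 ‖z‖) := by
    have := (((tendsto_const_nhds (x := (1 : ℂ))).sub (hpow.const_mul a)).div
      (tendsto_const_nhds.sub (hpow.const_mul p)) (by simp : (1 : ℂ) - p * 0 ≠ 0)).mul_const z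
    simpa [pow_succ'] using this.norm
  refine summable_of_ratio_norm_eventually_le (r := (1 + ‖z‖) / 2) (by linarith) ?_
  filter_upwards [hratio.eventually (ge_mem_nhds (by linarith : ‖z‖ < (1 + ‖z‖) / 2))] with k hk
  rw [norm_norm, norm_norm, qBinomial_coeff_succ, pow_succ]
  calc ‖qp p a k / qp p p k * ((1 - a * p ^ k) / (1 - p ^ (k + 1))) * (z ^ k * z)‖
      = ‖(1 - a * p ^ k) / (1 - p ^ (k + 1)) * z‖ * ‖qp p a k / qp p p k * z ^ k‖ := by
        rw [norm_mul, norm_mul, norm_mul, norm_mul, norm_mul]; ring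
    _ ≤ (1 + ‖z‖) / 2 * ‖qp p a k / qp p p k * z ^ k‖ := by gcongr

theorem norm_pow_mul_le (hp : ‖p‖ ≤ 1) (z : ℂ) (n : ℕ) : ‖p ^ n * z‖ ≤ ‖z‖ := by
  rw [norm_mul, norm_pow]
  exact mul_le_of_le_one_left (norm_nonneg z) (pow_le_one₀ (norm_nonneg p) hp)

theorem hasSum_qBinomialSeries (hp : ‖p‖ < 1) {z : ℂ} (hz : ‖z‖ < 1) :
    HasSum (fun k => qp p a k / qp p p k * z ^ k) (qBinomialSeries p a z) :=
  (summable_norm_qBinomial a hp hz).of_norm.hasSum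

theorem one_sub_mul_qBinomialSeries (hp : ‖p‖ < 1) {z : ℂ} (hz : ‖z‖ < 1) :
    (1 - z) * qBinomialSeries p a z = (1 - a * z) * qBinomialSeries p a (p * z) := by
  have hpz : ‖p * z‖ < 1 := by simpa using (norm_pow_mul_le hp.le z 1).trans_lt hz
  have hdiff : HasSum (fun k => qp p a k / qp p p k * (1 - p ^ k) * z ^ k)
      (qBinomialSeries p a z - qBinomialSeries p a (p * z)) :=
    ((hasSum_qBinomialSeries a hp hz).sub (hasSum_qBinomialSeries a hp hpz)).congr_fun
      fun k => by rw [mul_pow]; ring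
  -- the `k = 0` term vanishes, and the shifted coefficients are those of `z (f(z) - a f(pz))`
  have hshift : HasSum (fun k => z * (qp p a k / qp p p k * z ^ k
      - a * (qp p a k / qp p p k * (p * z) ^ k)))
      (qBinomialSeries p a z - qBinomialSeries p a (p * z)) := by
    have h := (hasSum_nat_add_iff' 1).2 hdiff
    rw [sum_range_one, pow_zero, sub_self, mul_zero, zero_mul, sub_zero] at h
    refine h.congr_fun fun k => ?_
    have hk := one_sub_pow_succ_ne_zero hp k
    rw [qBinomial_coeff_succ, mul_assoc _ (_ / _), div_mul_cancel₀ _ hk]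
    ring
  have := hshift.unique (((hasSum_qBinomialSeries a hp hz).sub
    ((hasSum_qBinomialSeries a hp hpz).mul_left a)).mul_left z)
  linear_combination this

theorem tendsto_qBinomialSeries_pow_mul (hp : ‖p‖ < 1) {z : ℂ} (hz : ‖z‖ < 1) :
    Tendsto (fun N => qBinomialSeries p a (p ^ N * z)) atTop (𝓝 1) := by
  have hpow := tendsto_pow_atTop_nhds_zero_of_norm_lt_one hp
  have h := tendsto_tsum_of_dominated_convergence (summable_norm_qBinomial a hp hz)
    (f := fun N k => qp p a k / qp p p k * (p ^ N * z) ^ k)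
    (g := fun k => qp p a k / qp p p k * (0 * z) ^ k)
    (fun k => ((hpow.mul_const z).pow k).const_mul _)
    (Eventually.of_forall fun N k => by
      rw [norm_mul, norm_mul, norm_pow, norm_pow]
      gcongr
      exact norm_pow_mul_le hp.le z N)
  rwa [tsum_eq_single 0 fun k hk => by simp [hk], pow_zero, mul_one,
    show qp p a 0 / qp p p 0 = 1 by simp [qp]] at h

theorem qBinomialSeries_mul_qpInf (hp : ‖p‖ < 1) {z : ℂ} (hz : ‖z‖ < 1) :
    qBinomialSeries p a z * qpInf p z = qpInf p (a * z) := by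
  have hiter : ∀ N, qp p z N * qBinomialSeries p a z =
      qp p (a * z) N * qBinomialSeries p a (p ^ N * z) := by
    intro N
    induction N with
    | zero => simp [qp]
    | succ N ih =>
      have := one_sub_mul_qBinomialSeries a hp ((norm_pow_mul_le hp.le z N).trans_lt hz)
      rw [qp_succ, qp_succ, pow_succ', mul_assoc p]
      linear_combination (1 - z * p ^ N) * ih + qp p (a * z) N * this
  have hlim := ((tendsto_qp_qpInf hp (a * z)).mul (tendsto_qBinomialSeries_pow_mul a hp hz))
  rw [mul_one, ← funext hiter] at hlim
  rw [mul_comm]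
  exact tendsto_nhds_unique ((tendsto_qp_qpInf hp z).mul_const _) hlim

end QBinomial

section RealProducts

variable {p : ℝ}

theorem tendsto_prod_re_qpInf_ofReal (hp0 : 0 ≤ p) (hp1 : p < 1) (s : ℝ) :
    Tendsto (fun N => ∏ j ∈ range N, (1 - s * p ^ j)) atTop (𝓝 (qpInf (p : ℂ) s).re) := by
  have hp : ‖(p : ℂ)‖ < 1 := by rwa [Complex.norm_real, Real.norm_of_nonneg hp0]
  convert (Complex.continuous_re.tendsto _).comp (tendsto_qp_qpInf hp (s : ℂ)) using 2 with N
  simp [qp, ← Complex.ofReal_pow, ← Complex.ofReal_mul, ← Complex.ofReal_one, ← Complex.ofReal_sub,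
    ← Complex.ofReal_prod]

theorem re_qpInf_ofReal_le (hp0 : 0 ≤ p) (hp1 : p < 1) {t : ℝ} (ht0 : 0 ≤ t) (ht1 : t ≤ 1) :
    (qpInf (p : ℂ) t).re ≤ 1 - t := by
  have hfac : ∀ j : ℕ, 0 ≤ 1 - t * p ^ j ∧ 1 - t * p ^ j ≤ 1 := fun j =>
    ⟨by nlinarith [pow_le_one₀ hp0 hp1.le (n := j), pow_nonneg hp0 j], by
      nlinarith [pow_nonneg hp0 j]⟩
  have hanti : Antitone fun N => ∏ j ∈ range N, (1 - t * p ^ j) :=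
    antitone_nat_of_succ_le fun N => by
      rw [prod_range_succ]
      exact mul_le_of_le_one_right (prod_nonneg fun j _ => (hfac j).1) (hfac N).2
  simpa using hanti.le_of_tendsto (tendsto_prod_re_qpInf_ofReal hp0 hp1 t) 1

theorem one_add_le_re_qpInf_ofReal_neg (hp0 : 0 ≤ p) (hp1 : p < 1) {t : ℝ} (ht0 : 0 ≤ t) :
    1 + t ≤ (qpInf (p : ℂ) (-t)).re := by
  have hfac : ∀ j : ℕ, 1 ≤ 1 - -t * p ^ j := fun j => by nlinarith [pow_nonneg hp0 j]
  have hmono : Monotone fun N => ∏ j ∈ range N, (1 - -t * p ^ j) :=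
    monotone_nat_of_le_succ fun N => by
      rw [prod_range_succ]
      exact le_mul_of_one_le_right (prod_nonneg fun j _ => zero_le_one.trans (hfac j)) (hfac N)
  have := hmono.ge_of_tendsto (by exact_mod_cast tendsto_prod_re_qpInf_ofReal hp0 hp1 (-t)) 1
  simpa [sub_eq_add_neg] using this

theorem qpInf_ofReal_neg_sub_ne_zero (hp0 : 0 ≤ p) (hp1 : p < 1) {t : ℝ} (ht0 : 0 < t)
    (ht1 : t ≤ 1) :
    qpInf (p : ℂ) (-t) - qpInf (p : ℂ) t ≠ 0 := by
  intro h
  have := congrArg Complex.re h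
  rw [Complex.sub_re, Complex.zero_re] at this
  linarith [re_qpInf_ofReal_le hp0 hp1 ht0.le ht1, one_add_le_re_qpInf_ofReal_neg hp0 hp1 ht0.le]

end RealProducts

theorem exists_ne_zero_add_inv_div_two_eq (x : ℂ) : ∃ z : ℂ, z ≠ 0 ∧ (z + z⁻¹) / 2 = x := by
  obtain ⟨s, hs⟩ := IsAlgClosed.exists_eq_mul_self (discrim 1 (-(2 * x)) 1)
  obtain ⟨z, hz⟩ := exists_quadratic_eq_zero one_ne_zero ⟨s, hs⟩
  have hz0 : z ≠ 0 := by rintro rfl; simp at hz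
  refine ⟨z, hz0, ?_⟩
  field_simp
  linear_combination hz

theorem IsRho.apply_neg {q : ℝ} {ρ : ℕ → ℂ → ℂ} (hρ : IsRho q ρ) (n : ℕ) (x : ℂ) :
    ρ n (-x) = (-1) ^ n * ρ n x := by
  rcases Nat.eq_zero_or_pos n with rfl | hn
  · simp [hρ.1]
  obtain ⟨z, hz0, rfl⟩ := exists_ne_zero_add_inv_div_two_eq x
  have hneg := (hρ.2 n hn).2 (-z) (neg_ne_zero.2 hz0)
  rw [show -((z + z⁻¹) / 2) = (-z + (-z)⁻¹) / 2 by rw [inv_neg]; ring, hneg,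
    (hρ.2 n hn).2 z hz0, neg_sq, zpow_neg, zpow_neg, zpow_natCast, zpow_natCast, neg_pow, mul_inv,
    ← inv_pow, inv_neg_one]
  ring

theorem Eqf_neg {q : ℝ} {ρ : ℕ → ℂ → ℂ} (hρ : IsRho q ρ) (x w : ℂ) :
    Eqf q ρ (-x) w = Eqf q ρ x (-w) :=
  tsum_congr fun n => by rw [hρ.apply_neg, neg_pow]; ring

theorem IsBigB.apply_neg {q : ℝ} (hq0 : 0 ≤ q) (hq1 : q < 1) {ρ B : ℕ → ℂ → ℂ} (hρ : IsRho q ρ)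
    (hB : IsBigB q ρ B) (n : ℕ) (x : ℂ) : B n (-x) = (-1) ^ n * B n x := by
  set p : ℝ := q ^ (1 / 2 : ℝ)
  have hp0 : 0 ≤ p := Real.rpow_nonneg hq0 _
  have hp1 : p < 1 := Real.rpow_lt_one hq0 hq1 (by norm_num)
  obtain ⟨r₁, hr₁, hr₁1, h₁⟩ := hB.2 (-x)
  obtain ⟨r₂, hr₂, -, h₂⟩ := hB.2 x
  have hsum₂ : ∀ w : ℂ, ‖w‖ < min r₁ r₂ → Summable fun n => (-1) ^ n * B n x * w ^ n :=
    fun w hw => by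
      obtain ⟨S, hS, -⟩ := h₂ (-w) (by rw [norm_neg]; exact hw.trans_le (min_le_right _ _))
      exact hS.summable.congr fun n => by rw [neg_pow]; ring
  refine congrFun (eq_of_tsum_ofReal_eventuallyEq (a := fun n => B n (-x)) (lt_min hr₁ hr₂)
    (fun w hw => ?_) hsum₂ ?_) n
  · obtain ⟨S, hS, -⟩ := h₁ w (hw.trans_le (min_le_left _ _))
    exact hS.summable
  filter_upwards [Ioo_mem_nhdsGT (lt_min hr₁ hr₂)] with t ⟨ht0, ht⟩
  have hnorm : ‖(t : ℂ)‖ = t := by rw [Complex.norm_real, Real.norm_of_nonneg ht0.le]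
  obtain ⟨S₁, hS₁, hR₁⟩ := h₁ t (by rw [hnorm]; exact ht.trans_le (min_le_left _ _))
  obtain ⟨S₂, hS₂, hR₂⟩ := h₂ (-t) (by rw [norm_neg, hnorm]; exact ht.trans_le (min_le_right _ _))
  rw [neg_neg, neg_sq, ← Eqf_neg hρ] at hR₂
  rw [show qpow q (1 / 2) = (p : ℂ) from rfl] at hR₁ hR₂
  have hF := qpInf_ofReal_neg_sub_ne_zero hp0 hp1 ht0 (ht.le.trans ((min_le_left _ _).trans hr₁1))
  rw [hS₁.tsum_eq, (tsum_congr fun n => by rw [neg_pow]; ring : _ = ∑' n, B n x * (-(t : ℂ)) ^ n),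
    hS₂.tsum_eq]
  exact mul_right_cancel₀ hF (by linear_combination hR₁ + hR₂)

theorem IsSmallB.apply_neg {q : ℝ} (hq0 : 0 ≤ q) (hq1 : q < 1) {ρ β : ℕ → ℂ → ℂ}
    (hρ : IsRho q ρ) (hβ : IsSmallB q ρ β) (n : ℕ) (x : ℂ) :
    β n (-x) = (-1) ^ n * ∑ k ∈ range (n + 1),
      (qp (qpow q (1/2)) (-1) k / qp (qpow q (1/2)) (qpow q (1/2)) k) * β (n - k) x := by
  set p : ℝ := q ^ (1 / 2 : ℝ)
  have hp0 : 0 ≤ p := Real.rpow_nonneg hq0 _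
  have hp1 : p < 1 := Real.rpow_lt_one hq0 hq1 (by norm_num)
  have hp : ‖(p : ℂ)‖ < 1 := by rwa [Complex.norm_real, Real.norm_of_nonneg hp0]
  have hqp : qpow q (1 / 2) = (p : ℂ) := rfl
  obtain ⟨r₁, hr₁, hr₁1, h₁⟩ := hβ.2 (-x)
  obtain ⟨r₂, hr₂, hr₂1, h₂⟩ := hβ.2 x
  have hsum₂ : ∀ w : ℂ, ‖w‖ < r₂ → Summable fun n => β n x * w ^ n := fun w hw => by
    obtain ⟨S, hS, -⟩ := h₂ w hw
    exact hS.summable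
  have hprod : ∀ w : ℂ, ‖w‖ < r₂ → HasSum
      (fun n => (-1) ^ n * (∑ k ∈ range (n + 1), qp (p : ℂ) (-1) k / qp (p : ℂ) p k * β (n - k) x)
        * w ^ n)
      (qBinomialSeries p (-1) (-w) * ∑' n, β n x * (-w) ^ n) := fun w hw => by
    have hw' : ‖-w‖ < r₂ := by rwa [norm_neg]
    refine (hasSum_sum_range_mul_mul_pow (summable_norm_qBinomial (-1) hp (hw'.trans_le hr₂1))
      (summable_norm_mul_pow_of_forall_summable hsum₂ hw')).congr_fun fun n => ?_
    rw [neg_pow w]; ring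
  rw [hqp]
  refine congrFun (eq_of_tsum_ofReal_eventuallyEq (a := fun n => β n (-x)) (lt_min hr₁ hr₂)
    (fun w hw => ?_) (fun w hw => (hprod w (hw.trans_le (min_le_right _ _))).summable) ?_) n
  · obtain ⟨S, hS, -⟩ := h₁ w (hw.trans_le (min_le_left _ _))
    exact hS.summable
  filter_upwards [Ioo_mem_nhdsGT (lt_min hr₁ hr₂)] with t ⟨ht0, ht⟩
  have hnorm : ‖(t : ℂ)‖ = t := by rw [Complex.norm_real, Real.norm_of_nonneg ht0.le]
  have ht₁ : ‖(t : ℂ)‖ < r₁ := by rw [hnorm]; exact ht.trans_le (min_le_left _ _)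
  have ht₂ : ‖(t : ℂ)‖ < r₂ := by rw [hnorm]; exact ht.trans_le (min_le_right _ _)
  obtain ⟨S₁, hS₁, hR₁⟩ := h₁ t ht₁
  obtain ⟨S₂, hS₂, hR₂⟩ := h₂ (-t) (by rwa [norm_neg])
  rw [neg_neg, ← Eqf_neg hρ] at hR₂
  rw [hqp] at hR₁ hR₂
  have hF := qpInf_ofReal_neg_sub_ne_zero hp0 hp1 ht0 (ht.le.trans ((min_le_left _ _).trans hr₁1))
  have hbinom := qBinomialSeries_mul_qpInf (-1) hp (z := -t)
    (by rw [norm_neg]; exact ht₂.trans_le hr₂1)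
  rw [neg_one_mul, neg_neg] at hbinom
  rw [hS₁.tsum_eq, (hprod t ht₂).tsum_eq, hS₂.tsum_eq]
  exact mul_right_cancel₀ hF (by
    linear_combination hR₁ + qBinomialSeries p (-1) (-t) * hR₂ - t * Eqf q ρ (-x) t * hbinom)

/-- Reflection formulas: `𝓑_n(−x;q) = (−1)^n 𝓑_n(x;q)` and
`β_n(−x;q) = (−1)^n Σ_k [(−1;q^{1/2})_k/(q^{1/2};q^{1/2})_k]·β_{n−k}(x;q)`. -/
theorem qBernoulli_reflection (q : ℝ) (hq0 : 0 < q) (hq1 : q < 1)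
    (ρ : ℕ → ℂ → ℂ) (hρ : IsRho q ρ)
    (B β : ℕ → ℂ → ℂ) (hB : IsBigB q ρ B) (hβ : IsSmallB q ρ β) :
    ∀ (n : ℕ) (x : ℂ),
      B n (-x) = (-1) ^ n * B n x ∧
      β n (-x) = (-1) ^ n *
        ∑ k ∈ Finset.range (n + 1),
          (qp (qpow q (1/2)) (-1) k / qp (qpow q (1/2)) (qpow q (1/2)) k) * β (n - k) x :=
  fun n x => ⟨hB.apply_neg hq0.le hq1 hρ n x, hβ.apply_neg hq0.le hq1 hρ n x⟩

end
end

section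
/- Let p>0, p≠1, and let δ, T, D_p be as in the context. Then the p-difference operator commutes with T on polynomials: for every complex polynomial f, D_p(T f) = T(D_p f). -/
open Polynomial

noncomputable section

/-- the p-number `[n]_p = (1-p^n)/(1-p)` -/
def pnum (p : ℝ) (n : ℕ) : ℂ := (1 - (p : ℂ) ^ n) / (1 - (p : ℂ))

/-- the p-factorial `[n]_p!` -/
def pfact (p : ℝ) (n : ℕ) : ℂ := ∏ j ∈ Finset.range n, pnum p (j + 1)

/-- the p-binomial coefficient -/
def pbinom (p : ℝ) (n k : ℕ) : ℂ := pfact p n / (pfact p k * pfact p (n - k))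

/-- `D` is the p-difference operator, the linear operator with `D X^n = [n]_p X^{n-1}` -/
def IsDp (p : ℝ) (D : Module.End ℂ (Polynomial ℂ)) : Prop :=
  ∀ n : ℕ, D (X ^ n) = Polynomial.C (pnum p n) * X ^ (n - 1)

/-- `T` is the linear operator with `T X^n = Σ_{k≤n} C_p(n,k) δ_k X^{n-k}` -/
def IsTp (p : ℝ) (δ : ℕ → ℂ) (T : Module.End ℂ (Polynomial ℂ)) : Prop :=
  ∀ n : ℕ, T (X ^ n) =
    ∑ k ∈ Finset.range (n + 1), Polynomial.C (pbinom p n k * δ k) * X ^ (n - k)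

/-- `φ` is a sequence of polynomials with `deg φ_n = n`, `φ_0 = 1`, `φ_n(0) = 0` and
`Tφ_n − φ_n = [n]_p X^{n-1}` for `n ≥ 1` -/
def IsPhi (p : ℝ) (T : Module.End ℂ (Polynomial ℂ)) (φ : ℕ → Polynomial ℂ) : Prop :=
  φ 0 = 1 ∧
  (∀ n : ℕ, 1 ≤ n → (φ n).natDegree = n ∧ (φ n).eval 0 = 0) ∧
  ∀ n : ℕ, 1 ≤ n → T (φ n) - φ n = Polynomial.C (pnum p n) * X ^ (n - 1)

/-! Both `D ∘ T` and `T ∘ D` are linear, so it suffices to compare them on `X ^ (n + 1)`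
(on constants both vanish). There the claim is the term-by-term identity
`C_p(n+1,k) [n+1-k]_p = [n+1]_p C_p(n,k)`, which follows from `[m+1]_p! = [m]_p! [m+1]_p`. -/

lemma pnum_zero (p : ℝ) : pnum p 0 = 0 := by
  simp [pnum]

lemma pfact_succ (p : ℝ) (n : ℕ) : pfact p (n + 1) = pfact p n * pnum p (n + 1) :=
  Finset.prod_range_succ _ n

lemma pfact_eq_zero_of_pnum_eq_zero {p : ℝ} {m n : ℕ} (hm : 1 ≤ m) (hmn : m ≤ n)
    (h : pnum p m = 0) : pfact p n = 0 :=
  Finset.prod_eq_zero (i := m - 1) (Finset.mem_range.mpr (by omega)) (by rwa [Nat.sub_add_cancel hm])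

/- When `[n - k + 1]_p = 0` both sides vanish: that factor also occurs in `[n]_p!`, or is
`[n + 1]_p` itself when `k = 0`. -/
lemma pbinom_succ_mul_pnum (p : ℝ) {n k : ℕ} (hk : k ≤ n) :
    pbinom p (n + 1) k * pnum p (n + 1 - k) = pnum p (n + 1) * pbinom p n k := by
  rw [show n + 1 - k = n - k + 1 by omega]
  by_cases h : pnum p (n - k + 1) = 0
  · have hrhs : pnum p (n + 1) = 0 ∨ pfact p n = 0 := by
      rcases Nat.eq_zero_or_pos k with rfl | hk0
      · exact .inl h
      · exact .inr (pfact_eq_zero_of_pnum_eq_zero (by omega) (by omega) h)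
    rcases hrhs with h' | h' <;> simp [pbinom, h, h']
  · rw [pbinom, pbinom, show n + 1 - k = n - k + 1 by omega, pfact_succ, pfact_succ,
      mul_left_comm (pfact p k), ← mul_assoc, div_mul_eq_mul_div, mul_div_mul_right _ _ h]
    ring

variable {p : ℝ} {δ : ℕ → ℂ} {D T : Module.End ℂ (Polynomial ℂ)}

lemma IsDp.map_C_mul_X_pow (hD : IsDp p D) (c : ℂ) (n : ℕ) :
    D (C c * X ^ n) = C (c * pnum p n) * X ^ (n - 1) := by
  rw [← smul_eq_C_mul, map_smul, hD, smul_eq_C_mul, ← mul_assoc, ← C_mul]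

lemma apply_X_pow_comm_of_isDp_of_isTp (hD : IsDp p D) (hT : IsTp p δ T) (n : ℕ) :
    D (T (X ^ n)) = T (D (X ^ n)) := by
  cases n with
  | zero =>
    rw [hT, hD, Finset.sum_range_one, hD.map_C_mul_X_pow]
    simp [pnum_zero]
  | succ n =>
    rw [hT, map_sum, Finset.sum_range_succ, hD.map_C_mul_X_pow, Nat.sub_self, pnum_zero, mul_zero,
      C_0, zero_mul, add_zero, hD, Nat.add_sub_cancel, ← smul_eq_C_mul, map_smul, hT, Finset.smul_sum]
    refine Finset.sum_congr rfl fun k hk ↦ ?_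
    have hkn : k ≤ n := Nat.lt_succ_iff.mp (Finset.mem_range.mp hk)
    rw [hD.map_C_mul_X_pow, smul_eq_C_mul, ← mul_assoc, ← C_mul, show n + 1 - k - 1 = n - k by omega]
    congr 2
    linear_combination δ k * pbinom_succ_mul_pnum p hkn

theorem Dp_commutes_with_T_general (p : ℝ)
    (δ : ℕ → ℂ)
    (D : Module.End ℂ (Polynomial ℂ)) (hD : IsDp p D)
    (T : Module.End ℂ (Polynomial ℂ)) (hT : IsTp p δ T) :
    ∀ f : Polynomial ℂ, D (T f) = T (D f) := by
  have hcomm : D ∘ₗ T = T ∘ₗ D := lhom_ext' fun n ↦ LinearMap.ext_ring <| by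
    simpa [← C_mul_X_pow_eq_monomial] using apply_X_pow_comm_of_isDp_of_isTp hD hT n
  exact LinearMap.congr_fun hcomm

/-- The p-difference operator commutes with `T` on polynomials. -/
theorem Dp_commutes_with_T (p : ℝ) (hp0 : 0 < p) (hp1 : p ≠ 1)
    (δ : ℕ → ℂ) (hδ0 : δ 0 = 1)
    (D : Module.End ℂ (Polynomial ℂ)) (hD : IsDp p D)
    (T : Module.End ℂ (Polynomial ℂ)) (hT : IsTp p δ T) :
    ∀ f : Polynomial ℂ, D (T f) = T (D f) :=
  Dp_commutes_with_T_general p δ D hD T hT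

end
end
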